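/- Let H be a real Hilbert space and let f_1,…,f_k : H → ℝ each be locally Lipschitz near x ∈ H. If 0 ∈ F_ε(x) for all ε > 0, then x is Pareto critical, i.e., 0 ∈ convexHull(⋃_{i=1}^k ∂f_i(x)). -/

import Mathlib

open Filter Topology RealInnerProductSpace

/-- Clarke generalized directional derivative
`f°(x;v) = limsup_{y→x, t↓0} (f(y+tv) − f(y))/t`. -/
noncomputable def clarkeDir {H : Type*} [NormedAddCommGroup H] [InnerProductSpace ℝ H]
    (f : H → ℝ) (x v : H) : ℝ :=
  limsup (fun p : H × ℝ => (f (p.1 + p.2 • v) - f p.1) / p.2)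
    ((𝓝 x) ×ˢ (𝓝[>] (0 : ℝ)))

/-- Clarke subdifferential, with the dual of `H` identified with `H` via the Riesz map:
`∂f(x) = {w : ⟪w, v⟫ ≤ f°(x;v) for all v}`. -/
def clarkeSubdiff {H : Type*} [NormedAddCommGroup H] [InnerProductSpace ℝ H]
    (f : H → ℝ) (x : H) : Set H :=
  {w : H | ∀ v : H, ⟪w, v⟫ ≤ clarkeDir f x v}

/-- Goldstein ε-subdifferential
`∂_ε f(x) = closure (convexHull (⋃_{y ∈ closedBall x ε} ∂f(y)))`. -/
def goldsteinSubdiff {H : Type*} [NormedAddCommGroup H] [InnerProductSpace ℝ H]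
    (f : H → ℝ) (ε : ℝ) (x : H) : Set H :=
  closure (convexHull ℝ (⋃ y ∈ Metric.closedBall x ε, clarkeSubdiff f y))

/-- `f` is locally Lipschitz near `x`: Lipschitz on some open ball around `x`. -/
def LocallyLipschitzNear {H : Type*} [NormedAddCommGroup H]
    (f : H → ℝ) (x : H) : Prop :=
  ∃ ε > 0, ∃ L : NNReal, LipschitzOnWith L f (Metric.ball x ε)

/-- Multiobjective ε-subdifferential `F_ε(x) = closure (convexHull (⋃ i, ∂_ε f_i(x)))`. -/
def multiSubdiff {H : Type*} [NormedAddCommGroup H] [InnerProductSpace ℝ H]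
    {k : ℕ} (f : Fin k → H → ℝ) (ε : ℝ) (x : H) : Set H :=
  closure (convexHull ℝ (⋃ i : Fin k, goldsteinSubdiff (f i) ε x))

/-- The weak topology on `H`: the topology induced by the functionals `⟪·, v⟫`, `v : H`. -/
noncomputable def weakTopology (H : Type*) [NormedAddCommGroup H] [InnerProductSpace ℝ H] :
    TopologicalSpace H :=
  ⨅ v : H, TopologicalSpace.induced (fun x : H => ⟪x, v⟫) inferInstance

/-!
If `0` is not in `C = conv ⋃ᵢ ∂fᵢ(x)`, a hyperplane strictly separates it from `C`: there are `v`
and `u > 0` with `⟪w, v⟫ < -u` on `C`. Since `fᵢ°(x; ·)` is sublinear and bounded by `L‖·‖`,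
Hahn–Banach makes it the support function of `∂fᵢ(x)`, so `fᵢ°(x; v) < -u`; by upper
semicontinuity of `y ↦ fᵢ°(y; v)` this persists, as `≤ -u`, on a ball of radius `ε`, which puts
all of `F_ε(x)` into the half-space `⟪·, v⟫ ≤ -u` and excludes `0`.

The separation needs `C` to be closed. Under the Riesz map each `∂fᵢ(x)` becomes a weak-* closed
bounded set, hence weak-* compact by Banach–Alaoglu, and the convex hull of finitely many compact
convex sets is compact, being a union of iterated convex joins.
-/

open Set
open scoped NNReal

section ConvexHull

variable {E : Type*} [AddCommGroup E] [Module ℝ E] [TopologicalSpace E] [ContinuousAdd E]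
  [ContinuousSMul ℝ E]

theorem IsCompact.convexJoin {s t : Set E} (hs : IsCompact s) (ht : IsCompact t) :
    IsCompact (_root_.convexJoin ℝ s t) := by
  have hjoin : _root_.convexJoin ℝ s t =
      (fun p : E × E × ℝ => (1 - p.2.2) • p.1 + p.2.2 • p.2.1) '' (s ×ˢ t ×ˢ Icc 0 1) := by
    ext z
    simp only [mem_convexJoin, segment_eq_image, mem_image, mem_prod, Prod.exists]
    aesop
  rw [hjoin]
  exact (hs.prod (ht.prod isCompact_Icc)).image (by fun_prop)

theorem isCompact_convexHull_biUnion {ι : Type*} (s : Finset ι) {K : ι → Set E}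
    (hK : ∀ i ∈ s, IsCompact (K i)) (hKc : ∀ i ∈ s, Convex ℝ (K i)) :
    IsCompact (convexHull ℝ (⋃ i ∈ s, K i)) := by
  classical
  induction s using Finset.induction_on with
  | empty => simp
  | insert a s _ ih =>
    simp only [Finset.mem_insert, forall_eq_or_imp] at hK hKc
    rw [Finset.set_biUnion_insert]
    rcases (K a).eq_empty_or_nonempty with hKa | hKa
    · simpa [hKa] using ih hK.2 hKc.2
    rcases (⋃ i ∈ s, K i).eq_empty_or_nonempty with hU | hU
    · simpa [hU, hKc.1.convexHull_eq] using hK.1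
    rw [convexHull_union hKa hU, hKc.1.convexHull_eq]
    exact hK.1.convexJoin (ih hK.2 hKc.2)

theorem isCompact_convexHull_iUnion {ι : Type*} [Finite ι] {K : ι → Set E}
    (hK : ∀ i, IsCompact (K i)) (hKc : ∀ i, Convex ℝ (K i)) :
    IsCompact (convexHull ℝ (⋃ i, K i)) := by
  have := Fintype.ofFinite ι
  simpa using isCompact_convexHull_biUnion Finset.univ (fun i _ => hK i) (fun i _ => hKc i)

end ConvexHull

theorem abs_apply_le_of_forall_le {E F : Type*} [SeminormedAddCommGroup E] [FunLike F E ℝ]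
    [AddMonoidHomClass F E ℝ] {g : F} {C : ℝ} (hg : ∀ z, g z ≤ C * ‖z‖) (z : E) :
    |g z| ≤ C * ‖z‖ := by
  have hneg := hg (-z)
  rw [map_neg, norm_neg] at hneg
  exact abs_le.2 ⟨by linarith, hg z⟩

theorem WeakDual.isCompact_setOf_forall_le {E : Type*} [SeminormedAddCommGroup E]
    [NormedSpace ℝ E] {N : E → ℝ} {C : ℝ≥0} (hN : ∀ z, N z ≤ C * ‖z‖) :
    IsCompact {φ : WeakDual ℝ E | ∀ z, φ z ≤ N z} := by
  have hclosed : IsClosed {φ : WeakDual ℝ E | ∀ z, φ z ≤ N z} := by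
    simp only [ofPred_forall]
    exact isClosed_iInter fun z => isClosed_le (WeakDual.eval_continuous z) continuous_const
  refine (WeakDual.isCompact_closedBall 0 C).of_isClosed_subset hclosed fun φ hφ => ?_
  rw [mem_preimage, mem_closedBall_zero_iff]
  refine ContinuousLinearMap.opNorm_le_bound _ C.2 fun z => ?_
  exact abs_apply_le_of_forall_le (g := φ) (fun z => (hφ z).trans (hN z)) z

theorem exists_linearMap_le_eq_of_sublinear {E : Type*} [AddCommGroup E] [Module ℝ E]
    {N : E → ℝ} (hsmul : ∀ c : ℝ, 0 < c → ∀ z, N (c • z) = c * N z)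
    (hadd : ∀ z w, N (z + w) ≤ N z + N w) (v : E) :
    ∃ g : E →ₗ[ℝ] ℝ, (∀ z, g z ≤ N z) ∧ g v = N v := by
  have hN0 : N 0 = 0 := by
    have := hsmul 2 two_pos 0
    rw [smul_zero] at this
    linarith
  have hline : ∀ c : ℝ, c * N v ≤ N (c • v) := by
    intro c
    rcases lt_trichotomy c 0 with hc | rfl | hc
    · have hneg := hadd v (-v)
      rw [add_neg_cancel, hN0] at hneg
      rw [show c • v = (-c) • -v by rw [neg_smul, smul_neg, neg_neg], hsmul (-c) (neg_pos.2 hc)]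
      nlinarith
    · simp [hN0]
    · rw [hsmul c hc]
  let p : E →ₗ.[ℝ] ℝ := LinearPMap.mkSpanSingleton' v (N v) fun c hc => by
    rcases eq_or_ne c 0 with rfl | hc0
    · exact zero_smul ..
    · rw [smul_eq_zero_iff_right hc0] at hc
      rw [hc, hN0, smul_zero]
  obtain ⟨g, hgp, hgN⟩ := exists_extension_of_le_sublinear p N hsmul hadd <| by
    rintro ⟨z, hz⟩
    obtain ⟨c, rfl⟩ := Submodule.mem_span_singleton.1 hz
    rw [LinearPMap.mkSpanSingleton'_apply]
    exact hline c
  exact ⟨g, hgN, (hgp ⟨v, Submodule.mem_span_singleton_self v⟩).trans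
    (LinearPMap.mkSpanSingleton'_apply_self ..)⟩

section ClarkeQuotient

variable {E : Type*} [NormedAddCommGroup E] [NormedSpace ℝ E] {f : E → ℝ} {L : ℝ≥0} {s : Set E}
  {x : E}

noncomputable def clarkeQuotient (f : E → ℝ) (v : E) (p : E × ℝ) : ℝ :=
  (f (p.1 + p.2 • v) - f p.1) / p.2

theorem tendsto_fst_add_snd_smul (v : E) :
    Tendsto (fun p : E × ℝ => p.1 + p.2 • v) (𝓝 x ×ˢ 𝓝[>] (0 : ℝ)) (𝓝 x) := by
  have h : Tendsto (fun p : E × ℝ => p.1 + p.2 • v) (𝓝 x ×ˢ 𝓝[>] (0 : ℝ)) (𝓝 (x + (0 : ℝ) • v)) :=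
    tendsto_fst.add ((tendsto_snd.mono_right nhdsWithin_le_nhds).smul_const v)
  simpa using h

theorem eventually_abs_clarkeQuotient_le (hf : LipschitzOnWith L f s) (hs : s ∈ 𝓝 x) (v : E) :
    ∀ᶠ p in 𝓝 x ×ˢ 𝓝[>] (0 : ℝ), |clarkeQuotient f v p| ≤ L * ‖v‖ := by
  filter_upwards [tendsto_fst.eventually hs, (tendsto_fst_add_snd_smul v).eventually hs,
    tendsto_snd.eventually self_mem_nhdsWithin] with p hp hpv (ht : 0 < p.2)
  rw [clarkeQuotient, abs_div, abs_of_pos ht, div_le_iff₀ ht]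
  calc |f (p.1 + p.2 • v) - f p.1| ≤ L * ‖p.2 • v‖ := by
        simpa [Real.dist_eq, dist_eq_norm] using hf.dist_le_mul _ hpv _ hp
    _ = L * ‖v‖ * p.2 := by rw [norm_smul, Real.norm_of_nonneg ht.le]; ring

theorem isBoundedUnder_le_clarkeQuotient (hf : LipschitzOnWith L f s) (hs : s ∈ 𝓝 x) (v : E) :
    IsBoundedUnder (· ≤ ·) (𝓝 x ×ˢ 𝓝[>] (0 : ℝ)) (clarkeQuotient f v) :=
  isBoundedUnder_of_eventually_le <|
    (eventually_abs_clarkeQuotient_le hf hs v).mono fun _ hp => (abs_le.1 hp).2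

theorem isCoboundedUnder_le_clarkeQuotient (hf : LipschitzOnWith L f s) (hs : s ∈ 𝓝 x)
    (v : E) : IsCoboundedUnder (· ≤ ·) (𝓝 x ×ˢ 𝓝[>] (0 : ℝ)) (clarkeQuotient f v) :=
  IsBoundedUnder.isCoboundedUnder_le <| isBoundedUnder_of_eventually_ge <|
    (eventually_abs_clarkeQuotient_le hf hs v).mono fun _ hp => (abs_le.1 hp).1

end ClarkeQuotient

section Clarke

variable {H : Type*} [NormedAddCommGroup H] [InnerProductSpace ℝ H] {f : H → ℝ} {L : ℝ≥0}
  {s : Set H} {x : H}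

theorem clarkeDir_eq_limsup (f : H → ℝ) (x v : H) :
    clarkeDir f x v = limsup (clarkeQuotient f v) (𝓝 x ×ˢ 𝓝[>] (0 : ℝ)) :=
  rfl

theorem clarkeDir_le_mul_norm (hf : LipschitzOnWith L f s) (hs : s ∈ 𝓝 x) (v : H) :
    clarkeDir f x v ≤ L * ‖v‖ :=
  limsup_le_of_le (isCoboundedUnder_le_clarkeQuotient hf hs v) <|
    (eventually_abs_clarkeQuotient_le hf hs v).mono fun _ hp => (abs_le.1 hp).2

theorem clarkeDir_add_le (hf : LipschitzOnWith L f s) (hs : s ∈ 𝓝 x) (u v : H) :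
    clarkeDir f x (u + v) ≤ clarkeDir f x u + clarkeDir f x v := by
  set F := 𝓝 x ×ˢ 𝓝[>] (0 : ℝ)
  set φ : H × ℝ → H × ℝ := fun p => (p.1 + p.2 • v, p.2)
  have hφ : Tendsto φ F F := (tendsto_fst_add_snd_smul v).prodMk tendsto_snd
  have hsplit : clarkeQuotient f (u + v) = clarkeQuotient f u ∘ φ + clarkeQuotient f v := by
    funext p
    simp only [clarkeQuotient, φ, Function.comp_apply, Pi.add_apply, smul_add, ← add_div]
    rw [add_right_comm, add_assoc p.1, sub_add_sub_cancel]
  have hu := hφ.eventually (eventually_abs_clarkeQuotient_le hf hs u)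
  have hu_ge : IsBoundedUnder (· ≥ ·) F (clarkeQuotient f u ∘ φ) :=
    isBoundedUnder_of_eventually_ge (hu.mono fun _ hp => (abs_le.1 hp).1)
  rw [clarkeDir_eq_limsup, hsplit]
  calc limsup (clarkeQuotient f u ∘ φ + clarkeQuotient f v) F
      ≤ limsup (clarkeQuotient f u ∘ φ) F + limsup (clarkeQuotient f v) F :=
        limsup_add_le hu_ge
          (isBoundedUnder_of_eventually_le (hu.mono fun _ hp => (abs_le.1 hp).2))
          (isCoboundedUnder_le_clarkeQuotient hf hs v) (isBoundedUnder_le_clarkeQuotient hf hs v)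
    _ ≤ limsup (clarkeQuotient f u) F + limsup (clarkeQuotient f v) F := by
        rw [limsup_comp]
        gcongr
        exact limsup_le_limsup_of_le hφ hu_ge.isCoboundedUnder_le
          (isBoundedUnder_le_clarkeQuotient hf hs u)

theorem clarkeDir_smul_of_pos (hf : LipschitzOnWith L f s) (hs : s ∈ 𝓝 x) {c : ℝ} (hc : 0 < c)
    (v : H) : clarkeDir f x (c • v) = c * clarkeDir f x v := by
  set F := 𝓝 x ×ˢ 𝓝[>] (0 : ℝ)
  have hmap : map (Prod.map id (c * ·)) F = F := by
    have h : map (c * ·) (𝓝[>] (0 : ℝ)) = 𝓝[>] 0 := by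
      conv_lhs => rw [← comap_mulLeft_nhdsGT_zero hc]
      exact map_comap_of_surjective (mul_left_surjective₀ hc.ne') _
    rw [← prod_map_right, h]
  have hq : clarkeQuotient f (c • v) =
      ((c * ·) ∘ clarkeQuotient f v) ∘ Prod.map id (c * ·) := by
    funext p
    simp only [clarkeQuotient, Function.comp_apply, Prod.map_fst, Prod.map_snd, id, smul_smul,
      mul_comm c]
    field_simp
  rw [clarkeDir_eq_limsup, clarkeDir_eq_limsup, hq, limsup_comp, hmap]
  exact ((monotone_mul_left_of_nonneg hc.le).map_limsup_of_continuousAt _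
    (continuous_const_mul c).continuousAt (isBoundedUnder_le_clarkeQuotient hf hs v)
    (isCoboundedUnder_le_clarkeQuotient hf hs v)).symm

theorem eventually_clarkeDir_le (hf : LipschitzOnWith L f s) (hs : s ∈ 𝓝 x) {v : H} {c : ℝ}
    (hc : clarkeDir f x v < c) : ∀ᶠ y in 𝓝 x, clarkeDir f y v ≤ c := by
  obtain ⟨a, ha, b, hb, hab⟩ := eventually_prod_iff.1 <|
    eventually_lt_of_limsup_lt hc (isBoundedUnder_le_clarkeQuotient hf hs v)
  filter_upwards [ha.eventually_nhds, eventually_mem_nhds_iff.2 hs] with y hy hsy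
  exact limsup_le_of_le (isCoboundedUnder_le_clarkeQuotient hf hsy v)
    ((hy.prod_mk hb).mono fun p hp => (hab hp.1 hp.2).le)

theorem exists_mem_clarkeSubdiff_inner_eq [CompleteSpace H] (hf : LipschitzOnWith L f s)
    (hs : s ∈ 𝓝 x) (v : H) : ∃ w ∈ clarkeSubdiff f x, ⟪w, v⟫ = clarkeDir f x v := by
  obtain ⟨g, hgN, hgv⟩ := exists_linearMap_le_eq_of_sublinear
    (fun c hc z => clarkeDir_smul_of_pos hf hs hc z) (clarkeDir_add_le hf hs) v
  have hg : ∀ z, ‖g z‖ ≤ L * ‖z‖ := fun z =>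
    abs_apply_le_of_forall_le (fun z => (hgN z).trans (clarkeDir_le_mul_norm hf hs z)) z
  refine ⟨(InnerProductSpace.toDual ℝ H).symm (g.mkContinuous L hg), fun z => ?_, ?_⟩
  · rw [InnerProductSpace.toDual_symm_apply]
    exact hgN z
  · rw [InnerProductSpace.toDual_symm_apply]
    exact hgv

end Clarke

section ParetoCriticality

variable {H : Type*} [NormedAddCommGroup H] [InnerProductSpace ℝ H]

theorem convex_setOf_inner_le (v : H) (c : ℝ) : Convex ℝ {z : H | ⟪z, v⟫ ≤ c} :=
  convex_halfSpace_le ((innerₗ H).flip v).isLinear c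

theorem closure_convexHull_subset_setOf_inner_le {t : Set H} {v : H} {c : ℝ}
    (ht : t ⊆ {z | ⟪z, v⟫ ≤ c}) : closure (convexHull ℝ t) ⊆ {z | ⟪z, v⟫ ≤ c} :=
  closure_minimal (convexHull_min ht (convex_setOf_inner_le v c))
    (isClosed_le (by fun_prop) continuous_const)

theorem convex_clarkeSubdiff (f : H → ℝ) (x : H) : Convex ℝ (clarkeSubdiff f x) := by
  simp only [clarkeSubdiff, ofPred_forall]
  exact convex_iInter fun v => convex_setOf_inner_le v _

theorem goldsteinSubdiff_subset_setOf_inner_le {f : H → ℝ} {ε c : ℝ} {x v : H}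
    (h : ∀ y ∈ Metric.closedBall x ε, clarkeDir f y v ≤ c) :
    goldsteinSubdiff f ε x ⊆ {z | ⟪z, v⟫ ≤ c} :=
  closure_convexHull_subset_setOf_inner_le <| iUnion₂_subset fun y hy _ hw => (hw v).trans (h y hy)

theorem multiSubdiff_subset_setOf_inner_le {k : ℕ} {f : Fin k → H → ℝ} {ε c : ℝ} {x v : H}
    (h : ∀ i, ∀ y ∈ Metric.closedBall x ε, clarkeDir (f i) y v ≤ c) :
    multiSubdiff f ε x ⊆ {z | ⟪z, v⟫ ≤ c} :=
  closure_convexHull_subset_setOf_inner_le <|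
    iUnion_subset fun i => goldsteinSubdiff_subset_setOf_inner_le (h i)

variable [CompleteSpace H]

noncomputable def InnerProductSpace.toWeakDual : H ≃ₗ[ℝ] WeakDual ℝ H :=
  (InnerProductSpace.toDual ℝ H).toLinearEquiv.trans StrongDual.toWeakDual

theorem InnerProductSpace.toWeakDual_apply (w z : H) : toWeakDual w z = ⟪w, z⟫ :=
  InnerProductSpace.toDual_apply_apply

theorem InnerProductSpace.continuous_toWeakDual : Continuous (toWeakDual : H → WeakDual ℝ H) :=
  WeakDual.continuous_of_continuous_eval fun z => by
    simp only [toWeakDual_apply]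
    fun_prop

theorem InnerProductSpace.toWeakDual_image_clarkeSubdiff (f : H → ℝ) (x : H) :
    toWeakDual '' clarkeSubdiff f x = {φ : WeakDual ℝ H | ∀ z, φ z ≤ clarkeDir f x z} := by
  ext φ
  rw [LinearEquiv.image_eq_preimage_symm]
  simp only [mem_preimage, clarkeSubdiff, mem_ofPred_eq, ← toWeakDual_apply,
    LinearEquiv.apply_symm_apply]

theorem isClosed_convexHull_iUnion_clarkeSubdiff {ι : Type*} [Finite ι] {f : ι → H → ℝ} {x : H}
    (hf : ∀ i, LocallyLipschitzNear (f i) x) :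
    IsClosed (convexHull ℝ (⋃ i, clarkeSubdiff (f i) x)) := by
  open InnerProductSpace in
  have hcompact : ∀ i, IsCompact (toWeakDual '' clarkeSubdiff (f i) x) := fun i => by
    obtain ⟨ε, hε, L, hL⟩ := hf i
    rw [toWeakDual_image_clarkeSubdiff]
    exact WeakDual.isCompact_setOf_forall_le (clarkeDir_le_mul_norm hL (Metric.ball_mem_nhds x hε))
  have himage : toWeakDual '' convexHull ℝ (⋃ i, clarkeSubdiff (f i) x) =
      convexHull ℝ (⋃ i, toWeakDual '' clarkeSubdiff (f i) x) := by
    rw [← image_iUnion]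
    exact LinearMap.image_convexHull (toWeakDual : H ≃ₗ[ℝ] WeakDual ℝ H).toLinearMap _
  rw [← toWeakDual.injective.preimage_image (convexHull ℝ _), himage]
  exact (isCompact_convexHull_iUnion hcompact
    fun i => (convex_clarkeSubdiff (f i) x).linear_image toWeakDual.toLinearMap).isClosed.preimage
    continuous_toWeakDual

end ParetoCriticality

/-- If `0 ∈ F_ε(x)` for all `ε > 0`, then `x` is Pareto critical. -/
theorem stmt8 {H : Type*} [NormedAddCommGroup H] [InnerProductSpace ℝ H] [CompleteSpace H]
    {k : ℕ} (f : Fin k → H → ℝ) (x : H)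
    (hlip : ∀ i, LocallyLipschitzNear (f i) x)
    (h : ∀ ε : ℝ, 0 < ε → (0 : H) ∈ multiSubdiff f ε x) :
    (0 : H) ∈ convexHull ℝ (⋃ i : Fin k, clarkeSubdiff (f i) x) := by
  by_contra h0
  obtain ⟨G, u, hG0, hGC⟩ := geometric_hahn_banach_point_closed (convex_convexHull ℝ _)
    (isClosed_convexHull_iUnion_clarkeSubdiff hlip) h0
  rw [map_zero] at hG0
  set v := -(InnerProductSpace.toDual ℝ H).symm G
  have hv : ∀ i, ∀ᶠ y in 𝓝 x, clarkeDir (f i) y v ≤ -u := fun i => by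
    obtain ⟨ε, hε, L, hL⟩ := hlip i
    obtain ⟨w, hw, hwv⟩ := exists_mem_clarkeSubdiff_inner_eq hL (Metric.ball_mem_nhds x hε) v
    have hGw := hGC w (subset_convexHull ℝ _ (mem_iUnion.2 ⟨i, hw⟩))
    refine eventually_clarkeDir_le hL (Metric.ball_mem_nhds x hε) ?_
    rw [← hwv, inner_neg_right, real_inner_comm, InnerProductSpace.toDual_symm_apply]
    linarith
  obtain ⟨ε, hε, hball⟩ := Metric.eventually_nhds_iff_ball.1 (eventually_all.2 hv)
  have h0u : (0 : H) ∈ {z | ⟪z, v⟫ ≤ -u} :=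
    multiSubdiff_subset_setOf_inner_le (fun i y hy => hball y
      (Metric.closedBall_subset_ball (half_lt_self hε) hy) i) (h _ (half_pos hε))
  rw [mem_ofPred_eq, inner_zero_left] at h0u
  linarith
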